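/- Let κ ≥ π², K ∈ ℕ with K ≥ 2, and η > 0 with π²/(κK²) ≤ η² ≤ 1. Then there exists an integer j with 1 ≤ j ≤ K−1 such that λ := 2(1 − cos(jπ/K))/η² satisfies 1 ≤ λ ≤ κ. Moreover, for this λ and the one-dimensional quadratic f(x) = (λ/2)x², the K-step leapfrog iteration with step size η (v_{k+1/2} = v_k − (η/2)f'(x_k), x_{k+1} = x_k + η v_{k+1/2}, v_{k+1} = v_{k+1/2} − (η/2)f'(x_{k+1})) satisfies x_K = (−1)^j · x₀ for every initial position x₀ ∈ ℝ and every initial velocity v₀ ∈ ℝ; hence the HMC proposal never leaves any set that is symmetric about the origin. -/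

import Mathlib

noncomputable section

/-- One leapfrog step on `ℝ × ℝ` for gradient field `gradf` and step size `η`. -/
def leapfrogStep1 (gradf : ℝ → ℝ) (η : ℝ) (p : ℝ × ℝ) : ℝ × ℝ :=
  let v' := p.2 - (η / 2) * gradf p.1
  let x' := p.1 + η * v'
  (x', v' - (η / 2) * gradf x')

lemma leapfrog_iter_formula (θ η : ℝ) (hη : η ≠ 0) (hs : Real.sin θ ≠ 0) (x₀ v₀ : ℝ) (k : ℕ) :
    (leapfrogStep1 (fun x => (2 * (1 - Real.cos θ) / η ^ 2) * x) η)^[k] (x₀, v₀) =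
      (Real.cos (k*θ) * x₀ + η * Real.sin (k*θ) / Real.sin θ * v₀,
       -(Real.sin θ * Real.sin (k*θ) / η) * x₀ + Real.cos (k*θ) * v₀) := by
  induction k with
  | zero => simp
  | succ k ih =>
    rw [Function.iterate_succ_apply', ih]
    have hc : Real.sin θ ^ 2 = 1 - Real.cos θ ^ 2 := Real.sin_sq θ
    simp only [leapfrogStep1, Prod.mk.injEq]
    push_cast
    rw [add_mul, one_mul, Real.cos_add, Real.sin_add]
    constructor
    · field_simp
      ring_nf
    · field_simp
      linear_combination
        (Real.sin (k*θ) * v₀ * η + Real.sin θ * x₀ * Real.cos (k*θ)) * hc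

set_option maxHeartbeats 1600000 in
theorem hmc_periodic_no_mixing (κ : ℝ) (hκ : Real.pi ^ 2 ≤ κ) (K : ℕ) (hK : 2 ≤ K)
    (η : ℝ) (hη : 0 < η) (hlo : Real.pi ^ 2 / (κ * K ^ 2) ≤ η ^ 2) (hhi : η ^ 2 ≤ 1) :
    ∃ j : ℕ, 1 ≤ j ∧ j ≤ K - 1 ∧
      (1 ≤ 2 * (1 - Real.cos (j * Real.pi / K)) / η ^ 2 ∧
        2 * (1 - Real.cos (j * Real.pi / K)) / η ^ 2 ≤ κ) ∧
      ∀ x₀ v₀ : ℝ,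
        ((leapfrogStep1
            (fun x => (2 * (1 - Real.cos (j * Real.pi / K)) / η ^ 2) * x) η)^[K]
          (x₀, v₀)).1 = (-1 : ℝ) ^ j * x₀ := by
  classical
  have hπ : (0:ℝ) < Real.pi := Real.pi_pos
  have hκ0 : (0:ℝ) < κ := lt_of_lt_of_le (by positivity) hκ
  have hK0 : (0:ℝ) < (K:ℝ) := by exact_mod_cast (show 0 < K by omega)
  have hK2 : (2:ℝ) ≤ (K:ℝ) := by exact_mod_cast hK
  -- the witness K-1 satisfies the predicate
  have hwit : 1 ≤ K - 1 ∧ η ^ 2 ≤ 2 * (1 - Real.cos (((K - 1 : ℕ)) * Real.pi / K)) := by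
    refine ⟨by omega, ?_⟩
    have hcast : ((K - 1 : ℕ) : ℝ) = (K : ℝ) - 1 := by
      have : (1:ℕ) ≤ K := by omega
      push_cast [this]; ring
    have hcos : Real.cos (((K - 1 : ℕ)) * Real.pi / K) ≤ 0 := by
      apply Real.cos_nonpos_of_pi_div_two_le_of_le
      · rw [hcast, le_div_iff₀ hK0]
        nlinarith
      · rw [hcast, div_le_iff₀ hK0]
        nlinarith
    nlinarith
  have hex : ∃ j : ℕ, 1 ≤ j ∧ η ^ 2 ≤ 2 * (1 - Real.cos (j * Real.pi / K)) := ⟨K - 1, hwit⟩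
  set j := Nat.find hex with hjdef
  have hspec := Nat.find_spec hex
  have hj1 : 1 ≤ j := hspec.1
  have hjP : η ^ 2 ≤ 2 * (1 - Real.cos (j * Real.pi / K)) := hspec.2
  have hjle : j ≤ K - 1 := Nat.find_le hwit
  have hmin : ∀ m, m < j → ¬(1 ≤ m ∧ η ^ 2 ≤ 2 * (1 - Real.cos (m * Real.pi / K))) :=
    fun m hm => Nat.find_min hex hm
  clear_value j
  clear hjdef hspec
  have hjK : (j:ℝ) ≤ (K:ℝ) - 1 := by
    have : (j:ℝ) ≤ ((K - 1 : ℕ) : ℝ) := by exact_mod_cast hjle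
    have hcast : ((K - 1 : ℕ) : ℝ) = (K : ℝ) - 1 := by
      have : (1:ℕ) ≤ K := by omega
      push_cast [this]; ring
    linarith [hcast ▸ this]
  refine ⟨j, hj1, hjle, ⟨?_, ?_⟩, ?_⟩
  · -- λ ≥ 1
    rw [le_div_iff₀ (by positivity)]
    linarith
  · -- λ ≤ κ
    rw [div_le_iff₀ (by positivity)]
    have hub : 2 * (1 - Real.cos ((j:ℝ) * Real.pi / K)) ≤ ((j:ℝ) * Real.pi / K) ^ 2 := by
      have := Real.one_sub_sq_div_two_le_cos (x := (j:ℝ) * Real.pi / K)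
      linarith
    rcases eq_or_lt_of_le hj1 with h1 | h2
    · -- j = 1
      have hj1' : (j:ℝ) = 1 := by exact_mod_cast h1.symm
      have : Real.pi ^ 2 / (K:ℝ) ^ 2 ≤ κ * η ^ 2 := by
        calc Real.pi ^ 2 / (K:ℝ) ^ 2 = κ * (Real.pi ^ 2 / (κ * (K:ℝ) ^ 2)) := by
              field_simp
          _ ≤ κ * η ^ 2 := mul_le_mul_of_nonneg_left hlo hκ0.le
      calc 2 * (1 - Real.cos ((j:ℝ) * Real.pi / K)) ≤ ((j:ℝ) * Real.pi / K) ^ 2 := hub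
        _ = Real.pi ^ 2 / (K:ℝ) ^ 2 := by rw [hj1']; ring
        _ ≤ κ * η ^ 2 := this
    · -- j ≥ 2 : use minimality at j - 1
      have hmin' := hmin (j - 1) (by omega)
      push_neg at hmin'
      have hPm : 2 * (1 - Real.cos (((j - 1 : ℕ)) * Real.pi / K)) < η ^ 2 :=
        hmin' (by omega)
      have hcastj : ((j - 1 : ℕ) : ℝ) = (j : ℝ) - 1 := by
        push_cast [hj1]; ring
      -- Jordan bound: 2(1-cos θ) ≥ 4θ²/π² for |θ| ≤ π
      have hj2 : (2:ℝ) ≤ (j:ℝ) := by exact_mod_cast h2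
      have hθm : |((j:ℝ) - 1) * Real.pi / K| ≤ Real.pi := by
        rw [abs_of_nonneg (div_nonneg (mul_nonneg (by linarith) hπ.le) hK0.le),
          div_le_iff₀ hK0]
        nlinarith
      have hjordan := Real.cos_le_one_sub_mul_cos_sq hθm
      have hlow : 4 * ((j:ℝ) - 1) ^ 2 / (K:ℝ) ^ 2 ≤
          2 * (1 - Real.cos (((j:ℝ) - 1) * Real.pi / K)) := by
        have heq : 2 / Real.pi ^ 2 * (((j:ℝ) - 1) * Real.pi / K) ^ 2
            = 2 * ((j:ℝ) - 1) ^ 2 / (K:ℝ) ^ 2 := by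
          field_simp
        calc 4 * ((j:ℝ) - 1) ^ 2 / (K:ℝ) ^ 2
            = 2 * (2 / Real.pi ^ 2 * (((j:ℝ) - 1) * Real.pi / K) ^ 2) := by
              rw [heq]; ring
          _ ≤ 2 * (1 - Real.cos (((j:ℝ) - 1) * Real.pi / K)) := by linarith [hjordan]
      rw [hcastj] at hPm
      -- so η² > 4(j-1)²/K²
      have hηlow : 4 * ((j:ℝ) - 1) ^ 2 / (K:ℝ) ^ 2 < η ^ 2 := lt_of_le_of_lt hlow hPm
      calc 2 * (1 - Real.cos ((j:ℝ) * Real.pi / K)) ≤ ((j:ℝ) * Real.pi / K) ^ 2 := hub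
        _ = (j:ℝ) ^ 2 * Real.pi ^ 2 / (K:ℝ) ^ 2 := by ring
        _ ≤ κ * η ^ 2 := by
            have h4 : (j:ℝ) ^ 2 ≤ 4 * ((j:ℝ) - 1) ^ 2 := by nlinarith
            have hKK : (0:ℝ) < (K:ℝ) ^ 2 := by positivity
            rw [div_le_iff₀ hKK]
            have h1 : (j:ℝ) ^ 2 * Real.pi ^ 2 ≤ κ * (4 * ((j:ℝ) - 1) ^ 2) := by
              nlinarith [mul_le_mul hκ h4 (by positivity) hκ0.le]
            have hmul := mul_le_mul_of_nonneg_left hηlow.le hκ0.le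
            have h2 : κ * (4 * ((j:ℝ) - 1) ^ 2) ≤ κ * η ^ 2 * (K:ℝ) ^ 2 := by
              calc κ * (4 * ((j:ℝ) - 1) ^ 2)
                  = κ * (4 * ((j:ℝ) - 1) ^ 2 / (K:ℝ) ^ 2) * (K:ℝ) ^ 2 := by
                    field_simp
                _ ≤ κ * η ^ 2 * (K:ℝ) ^ 2 := by nlinarith [hmul]
            linarith
  · -- dynamics
    intro x₀ v₀
    set θ : ℝ := (j:ℝ) * Real.pi / K with hθdef
    have hθpos : 0 < θ := by
      have : (1:ℝ) ≤ (j:ℝ) := by exact_mod_cast hj1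
      positivity
    have hθlt : θ < Real.pi := by
      rw [hθdef, div_lt_iff₀ hK0]
      nlinarith
    have hs : Real.sin θ ≠ 0 := ne_of_gt (Real.sin_pos_of_pos_of_lt_pi hθpos hθlt)
    rw [leapfrog_iter_formula θ η (ne_of_gt hη) hs x₀ v₀ K]
    have hKθ : (K:ℝ) * θ = (j:ℝ) * Real.pi := by
      rw [hθdef]; field_simp
    rw [hKθ]
    have hcos : Real.cos ((j:ℝ) * Real.pi) = (-1:ℝ) ^ j := by
      simpa using Real.cos_nat_mul_pi_sub 0 j
    have hsin : Real.sin ((j:ℝ) * Real.pi) = 0 := Real.sin_nat_mul_pi j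
    simp [hcos, hsin]
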